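/- For every n ∈ ℕ, the image under the Cantor–Lebesgue map of the set [x(n)=1] equals the union of the intervals good at n: λ``{y ∈ 2^ω : y(n)=1} = ⋃_{i<2^n} [(2i+1)/2^{n+1}, (2i+2)/2^{n+1}]. -/

import Mathlib

/-- The Cantor–Lebesgue map `λ : 2^ω → [0,1]`, `λ x = Σ_n x(n)/2^(n+1)`. -/
noncomputable def cantorLebesgue (x : ℕ → Bool) : ℝ :=
  ∑' n : ℕ, (if x n = true then (1 : ℝ) else 0) / 2 ^ (n + 1)

/-- The closed interval good at `n` with index `i`. -/
noncomputable def goodInterval (n i : ℕ) : Set ℝ :=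
  Set.Icc ((2 * i + 1 : ℝ) / 2 ^ (n + 1)) ((2 * i + 2 : ℝ) / 2 ^ (n + 1))

lemma cL_term_nonneg (x : ℕ → Bool) (n : ℕ) :
    0 ≤ (if x n = true then (1 : ℝ) else 0) / 2 ^ (n + 1) := by
  have : (0:ℝ) ≤ (if x n = true then (1 : ℝ) else 0) := by split <;> norm_num
  positivity

lemma geo_summable : Summable (fun n : ℕ => (1:ℝ) / 2 ^ (n+1)) :=
  (summable_geometric_two' 1).congr (fun n => by rw [div_div, ← pow_succ'])

lemma geo_tsum : ∑' n : ℕ, (1:ℝ) / 2 ^ (n+1) = 1 := by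
  calc ∑' n : ℕ, (1:ℝ) / 2 ^ (n+1) = ∑' n : ℕ, (1:ℝ) / 2 / 2 ^ n :=
        tsum_congr fun n => by rw [pow_succ', ← div_div]
    _ = 1 := tsum_geometric_two' 1

lemma cL_term_le (x : ℕ → Bool) (n : ℕ) :
    (if x n = true then (1 : ℝ) else 0) / 2 ^ (n + 1) ≤ 1 / 2 ^ (n + 1) := by
  gcongr
  split <;> norm_num

lemma cL_summable (x : ℕ → Bool) :
    Summable (fun n => (if x n = true then (1 : ℝ) else 0) / 2 ^ (n + 1)) :=
  Summable.of_nonneg_of_le (cL_term_nonneg x) (cL_term_le x) geo_summable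

lemma cL_nonneg (x : ℕ → Bool) : 0 ≤ cantorLebesgue x :=
  tsum_nonneg (cL_term_nonneg x)

lemma cL_le_one (x : ℕ → Bool) : cantorLebesgue x ≤ 1 := by
  have h := Summable.tsum_le_tsum (cL_term_le x) (cL_summable x) geo_summable
  rw [geo_tsum] at h
  exact h

lemma cL_split (x : ℕ → Bool) (m : ℕ) :
    cantorLebesgue x = (∑ k ∈ Finset.range m, (if x k = true then (1 : ℝ) else 0) / 2 ^ (k + 1))
      + cantorLebesgue (fun k => x (k + m)) / 2 ^ m := by
  rw [cantorLebesgue, ← Summable.sum_add_tsum_nat_add m (cL_summable x)]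
  congr 1
  rw [cantorLebesgue, ← tsum_div_const]
  apply tsum_congr
  intro k
  rw [div_div, ← pow_add]
  ring_nf

lemma testBit_sum (n : ℕ) : ∀ i : ℕ, i < 2 ^ n →
    ∑ k ∈ Finset.range n, (if Nat.testBit i k then 2 ^ k else 0) = i := by
  induction n with
  | zero => intro i hi; interval_cases i; simp
  | succ n ih =>
    intro i hi
    rw [Finset.sum_range_succ' (fun k => if Nat.testBit i k then 2 ^ k else 0) n]
    have h2 : i / 2 < 2 ^ n := by
      rw [pow_succ] at hi; omega
    have key := ih (i / 2) h2
    have hb : ∀ k, Nat.testBit i (k + 1) = Nat.testBit (i / 2) k := by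
      intro k; rw [Nat.testBit_succ]
    have : ∑ k ∈ Finset.range n, (if Nat.testBit i (k + 1) then 2 ^ (k + 1) else 0)
        = 2 * (i / 2) := by
      rw [← key, Finset.mul_sum]
      refine Finset.sum_congr rfl fun k _ => ?_
      rw [hb k, pow_succ]
      split <;> ring
    rw [this]
    have h0 : (if Nat.testBit i 0 then 2 ^ 0 else 0) = i % 2 := by
      rcases Nat.mod_two_eq_zero_or_one i with h | h <;> simp [Nat.testBit_zero, h]
    omega

lemma sum_two_pow_reflect (n : ℕ) (y : ℕ → Bool) :
    ∑ k ∈ Finset.range n, (if y k = true then 2 ^ (n - 1 - k) else 0)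
      = ∑ k ∈ Finset.range n, (if y (n - 1 - k) = true then 2 ^ k else 0) := by
  have e : ∀ k ∈ Finset.range n, (if y k = true then 2 ^ (n - 1 - k) else 0)
      = (fun j => if y (n - 1 - j) = true then 2 ^ j else 0) (n - 1 - k) := by
    intro k hk
    rw [Finset.mem_range] at hk
    simp only
    rw [show n - 1 - (n - 1 - k) = k by omega]
  rw [Finset.sum_congr rfl e]
  exact Finset.sum_range_reflect (fun j => if y (n - 1 - j) = true then 2 ^ j else 0) n

lemma idx_lt (n : ℕ) (y : ℕ → Bool) :
    ∑ k ∈ Finset.range n, (if y k = true then 2 ^ (n - 1 - k) else 0) < 2 ^ n := by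
  rw [sum_two_pow_reflect]
  calc ∑ k ∈ Finset.range n, (if y (n - 1 - k) = true then 2 ^ k else 0)
      ≤ ∑ k ∈ Finset.range n, 2 ^ k := Finset.sum_le_sum fun k _ => by split <;> simp
    _ < 2 ^ n := by
        have := Nat.geomSum_eq (le_refl 2) n
        have h1 : (1:ℕ) ≤ 2 ^ n := Nat.one_le_two_pow
        simp only [this]
        omega

/-- Real form: the partial sum of weights equals idx / 2^n. -/
lemma sum_real_eq_idx (n : ℕ) (y : ℕ → Bool) :
    ∑ k ∈ Finset.range n, (if y k = true then (1:ℝ) else 0) / 2 ^ (k + 1)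
      = (∑ k ∈ Finset.range n, (if y k = true then 2 ^ (n - 1 - k) else 0) : ℕ) / 2 ^ n := by
  push_cast
  rw [Finset.sum_div]
  refine Finset.sum_congr rfl fun k hk => ?_
  rw [Finset.mem_range] at hk
  have hpow : (2:ℝ) ^ (n - 1 - k) * 2 ^ (k+1) = 2 ^ n := by
    rw [← pow_add]; congr 1; omega
  by_cases h : y k = true
  · simp only [if_pos h]
    rw [div_eq_div_iff (by positivity) (by positivity), one_mul, ← hpow]
  · simp [h]

lemma cL_surj {r : ℝ} (h0 : 0 ≤ r) (h1 : r ≤ 1) :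
    ∃ x : ℕ → Bool, cantorLebesgue x = r := by
  rcases eq_or_lt_of_le h1 with h1 | h1
  · refine ⟨fun _ => true, ?_⟩
    rw [cantorLebesgue, h1]
    simpa using geo_tsum
  · set x : ℕ → Bool := fun k => decide ((1:ℝ)/2 ≤ Int.fract (r * 2 ^ k)) with hx
    have key : ∀ N, ∑ k ∈ Finset.range N, (if x k = true then (1:ℝ) else 0) / 2 ^ (k+1)
        = (⌊r * 2 ^ N⌋ : ℝ) / 2 ^ N := by
      intro N
      induction N with
      | zero => simp [Int.floor_eq_zero_iff.2 ⟨h0, h1⟩]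
      | succ N ihN =>
        rw [Finset.sum_range_succ, ihN]
        have hfr0 := Int.fract_nonneg (r * 2 ^ N)
        have hfr1 := Int.fract_lt_one (r * 2 ^ N)
        have hsplit : r * 2 ^ (N+1)
            = ((2 * ⌊r * 2 ^ N⌋ : ℤ) : ℝ) + Int.fract (r * 2 ^ N) * 2 := by
          have h := Int.floor_add_fract (r * 2 ^ N)
          push_cast
          nlinarith [h, pow_succ (2:ℝ) N]
        have hfloor : ⌊r * 2 ^ (N+1)⌋
            = 2 * ⌊r * 2 ^ N⌋ + (if (1:ℝ)/2 ≤ Int.fract (r * 2 ^ N) then 1 else 0) := by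
          rw [hsplit, Int.floor_intCast_add]
          congr 1
          split
          · rename_i h
            rw [Int.floor_eq_iff]
            constructor <;> push_cast <;> linarith
          · rename_i h
            push_neg at h
            rw [Int.floor_eq_iff]
            constructor <;> push_cast <;> linarith
        have hxN : (if x N = true then (1:ℝ) else 0)
            = (if (1:ℝ)/2 ≤ Int.fract (r * 2 ^ N) then 1 else 0) := by
          rw [hx]
          simp only [decide_eq_true_iff]
        rw [hxN, hfloor]
        push_cast
        split
        · rw [div_add_div _ _ (by positivity) (by positivity),
            div_eq_div_iff (by positivity) (by positivity)]
          ring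
        · rw [div_add_div _ _ (by positivity) (by positivity),
            div_eq_div_iff (by positivity) (by positivity)]
          ring
    have hsum := (cL_summable x).hasSum.tendsto_sum_nat
    rw [funext key] at hsum
    have h2 : Filter.Tendsto (fun N : ℕ => (⌊r * 2 ^ N⌋ : ℝ) / 2 ^ N)
        Filter.atTop (nhds r) := by
      have hg : Filter.Tendsto (fun N : ℕ => r - (1/2:ℝ) ^ N) Filter.atTop (nhds r) := by
        have := tendsto_pow_atTop_nhds_zero_of_lt_one (by norm_num : (0:ℝ) ≤ 1/2)
          (by norm_num : (1/2:ℝ) < 1)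
        simpa using tendsto_const_nhds.sub this
      refine tendsto_of_tendsto_of_tendsto_of_le_of_le hg tendsto_const_nhds
        (fun N => ?_) (fun N => ?_)
      · have hlt := Int.sub_one_lt_floor (r * 2 ^ N)
        have hp : (0:ℝ) < 2 ^ N := by positivity
        rw [le_div_iff₀ hp]
        have he : ((1:ℝ)/2) ^ N = 1 / 2 ^ N := by rw [div_pow]; norm_num
        rw [he]
        have h2N : (r - 1 / 2 ^ N) * 2 ^ N = r * 2 ^ N - 1 := by field_simp
        linarith [h2N]
      · have hle := Int.floor_le (r * 2 ^ N)
        have hp : (0:ℝ) < 2 ^ N := by positivity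
        rw [div_le_iff₀ hp]
        linarith
    exact ⟨x, tendsto_nhds_unique hsum h2⟩

/-- the image of `[x(n)=1]` under the Cantor–Lebesgue map is the
union of the `2^n` intervals good at `n`. -/
theorem stmt11 (n : ℕ) :
    cantorLebesgue '' {y : ℕ → Bool | y n = true} =
      ⋃ i < 2 ^ n, goodInterval n i := by
  have hP : (0:ℝ) < 2 ^ (n+1) := by positivity
  ext t
  simp only [Set.mem_image, Set.mem_setOf_eq, Set.mem_iUnion, goodInterval, Set.mem_Icc,
    exists_prop]
  constructor
  · rintro ⟨y, hy, rfl⟩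
    refine ⟨∑ k ∈ Finset.range n, (if y k = true then 2 ^ (n - 1 - k) else 0),
      idx_lt n y, ?_, ?_⟩ <;>
    · set i : ℕ := ∑ k ∈ Finset.range n, (if y k = true then 2 ^ (n - 1 - k) else 0) with hi
      have hs := cL_split y (n+1)
      rw [Finset.sum_range_succ, sum_real_eq_idx n y, ← hi, if_pos hy] at hs
      have hT0 := cL_nonneg (fun k => y (k + (n+1)))
      have hT1 := cL_le_one (fun k => y (k + (n+1)))
      set T := cantorLebesgue (fun k => y (k + (n+1)))
      have hei : (i:ℝ)/2^n + 1/2^(n+1) = (2*(i:ℝ)+1)/2^(n+1) := by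
        rw [div_add_div _ _ (by positivity) (by positivity),
          div_eq_div_iff (by positivity) (by positivity), pow_succ]
        ring
      have hub : T / 2^(n+1) ≤ 1 / 2^(n+1) := by gcongr
      have hlb : 0 ≤ T / 2^(n+1) := by positivity
      have hadd : (2*(i:ℝ)+1)/2^(n+1) + 1/2^(n+1) = (2*(i:ℝ)+2)/2^(n+1) := by
        rw [← add_div]; ring_nf
      rw [hs]
      linarith
  · rintro ⟨i, hi, hlow, hhigh⟩
    have hr0 : 0 ≤ t * 2^(n+1) - (2*(i:ℝ)+1) := by
      have := (div_le_iff₀ hP).1 hlow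
      linarith
    have hr1 : t * 2^(n+1) - (2*(i:ℝ)+1) ≤ 1 := by
      have := (le_div_iff₀ hP).1 hhigh
      linarith
    obtain ⟨z, hz⟩ := cL_surj hr0 hr1
    set y : ℕ → Bool := fun k =>
      if k < n then Nat.testBit i (n-1-k) else if k = n then true else z (k - (n+1)) with hy
    have hyn : y n = true := by
      rw [hy]; simp
    refine ⟨y, hyn, ?_⟩
    have hsh : (fun k => y (k + (n+1))) = z := by
      funext k
      rw [hy]
      simp only
      rw [if_neg (by omega), if_neg (by omega)]
      congr 1
      omega
    have hnat : ∑ k ∈ Finset.range n, (if y k = true then 2^(n-1-k) else 0) = i := by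
      have h1 : ∀ k ∈ Finset.range n, (if y k = true then 2^(n-1-k) else 0)
          = (if Nat.testBit i (n-1-k) = true then 2^(n-1-k) else 0) := by
        intro k hk
        rw [Finset.mem_range] at hk
        rw [hy]
        simp [hk]
      rw [Finset.sum_congr rfl h1,
        sum_two_pow_reflect n (fun j => Nat.testBit i (n-1-j))]
      have h2 : ∀ k ∈ Finset.range n, (if Nat.testBit i (n-1-(n-1-k)) = true then 2^k else 0)
          = (if Nat.testBit i k then 2^k else 0) := by
        intro k hk
        rw [Finset.mem_range] at hk
        rw [show n-1-(n-1-k) = k by omega]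
      rw [Finset.sum_congr rfl h2, testBit_sum n i hi]
    have hs := cL_split y (n+1)
    rw [Finset.sum_range_succ, sum_real_eq_idx n y, hnat, if_pos hyn, hsh, hz] at hs
    rw [hs]
    field_simp
    ring
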